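/- arXiv:1612.01573 — 2 statements merged into one kernel-verified Lean document; each statement's English description precedes it below -/
import Mathlib

section
/- Let (Xₙ)_{n≥0} be a Galton–Watson branching process with X₀ = 1, offspring mean μ = E[X₁] ∈ (0,1], and offspring generating function f. Set pₙ = P(Xₙ ≥ 1). Then lim_{n→∞} pₙ₊₁/pₙ = μ, provided either P(X₁ = 1) < 1 or μ = 1 with pₙ = 1 for all n (in which case the limit is trivially 1 = μ). -/
/-!
Let `f` be the offspring generating function and `sₙ = P(Xₙ = 0) = 1 - pₙ`. Given `Xₙ`, the
generation `Xₙ₊₁` is a sum of `Xₙ` fresh i.i.d. offspring numbers, so `E[t ^ Xₙ₊₁] = E[f(t) ^ Xₙ]`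
and hence `sₙ = f^[n] 0`. When `μ ≤ 1` and `P(X₁ = 1) < 1` (and `μ > 0`), every `t ∈ [0, 1)`
satisfies `t < f t < 1`, so `sₙ` increases to `1` without reaching it, and
`pₙ₊₁ / pₙ = (1 - f sₙ) / (1 - sₙ) → f'(1⁻) = μ`.
-/

open Filter MeasureTheory ProbabilityTheory Finset Set Topology
open scoped ENNReal

section GeomSum

variable {R : Type*} [Semiring R] [LinearOrder R] [IsStrictOrderedRing R] {t : R}

lemma geom_sum_le_of_le_one (h0 : 0 ≤ t) (h1 : t ≤ 1) (k : ℕ) : ∑ j ∈ range k, t ^ j ≤ k :=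
  (sum_le_sum fun j _ => pow_le_one₀ h0 h1).trans_eq (by simp)

lemma geom_sum_lt_of_lt_one (h0 : 0 ≤ t) (h1 : t < 1) {k : ℕ} (hk : 2 ≤ k) :
    ∑ j ∈ range k, t ^ j < k :=
  (sum_lt_sum (fun j _ => pow_le_one₀ h0 h1.le) ⟨1, mem_range.2 hk, by simpa using h1⟩).trans_eq
    (by simp)

end GeomSum

lemma iterate_mem_Ico {f : ℝ → ℝ} {a b : ℝ} (hab : a < b)
    (hf : ∀ t ∈ Ico a b, t < f t ∧ f t < b) (n : ℕ) : f^[n] a ∈ Ico a b := by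
  induction n with
  | zero => exact ⟨le_rfl, hab⟩
  | succ n ih =>
    rw [Function.iterate_succ_apply']
    exact ⟨ih.1.trans (hf _ ih).1.le, (hf _ ih).2⟩

/-- The limit of the increasing orbit is a fixed point of `f` in `[a, b]`, and `f` has none
in `[a, b)`. -/
lemma tendsto_iterate_of_lt {f : ℝ → ℝ} {a b : ℝ} (hab : a < b) (hcont : ContinuousOn f (Icc a b))
    (hf : ∀ t ∈ Ico a b, t < f t ∧ f t < b) : Tendsto (fun n => f^[n] a) atTop (𝓝 b) := by
  set s := fun n => f^[n] a
  have hmem : ∀ n, s n ∈ Icc a b := fun n => Ico_subset_Icc_self (iterate_mem_Ico hab hf n)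
  have hmono : Monotone s := monotone_nat_of_le_succ fun n => by
    simp only [s, Function.iterate_succ_apply']
    exact (hf _ (iterate_mem_Ico hab hf n)).1.le
  have hlim := tendsto_atTop_ciSup hmono ⟨b, forall_mem_range.2 fun n => (hmem n).2⟩
  set L := ⨆ n, s n
  have hL : L ∈ Icc a b := isClosed_Icc.mem_of_tendsto hlim (Eventually.of_forall hmem)
  have hfix : f L = L := by
    refine tendsto_nhds_unique ?_ ((tendsto_add_atTop_iff_nat 1).2 hlim)
    simp only [s, Function.iterate_succ_apply']
    exact (hcont L hL).tendsto.comp (tendsto_nhdsWithin_iff.2 ⟨hlim, Eventually.of_forall hmem⟩)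
  obtain hLb | hLb := hL.2.lt_or_eq
  · exact absurd hfix (hf L ⟨hL.1, hLb⟩).1.ne'
  · rwa [← hLb]

section Pgf

variable {Ω : Type*} [MeasurableSpace Ω] {P : Measure Ω}

noncomputable def pgf (P : Measure Ω) (ξ : Ω → ℕ) (t : ℝ) : ℝ := ∫ ω, t ^ ξ ω ∂P

variable {ξ : Ω → ℕ} {t : ℝ}

lemma integrable_pow_of_mem_Icc [IsProbabilityMeasure P] (hξ : Measurable ξ)
    (ht : t ∈ Icc (0 : ℝ) 1) : Integrable (fun ω => t ^ ξ ω) P :=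
  Integrable.of_bound ((measurable_of_countable fun k : ℕ => t ^ k).comp hξ).aestronglyMeasurable 1
    (ae_of_all _ fun ω => by
      rw [Real.norm_eq_abs, abs_of_nonneg (pow_nonneg ht.1 _)]
      exact pow_le_one₀ ht.1 ht.2)

lemma pgf_nonneg (ht : 0 ≤ t) : 0 ≤ pgf P ξ t :=
  integral_nonneg fun _ => pow_nonneg ht _

lemma pgf_le_one [IsProbabilityMeasure P] (ht : t ∈ Icc (0 : ℝ) 1) : pgf P ξ t ≤ 1 := by
  have := integral_mono_of_nonneg (μ := P) (f := fun ω => t ^ ξ ω) (g := fun _ => (1 : ℝ))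
    (ae_of_all _ fun _ => pow_nonneg ht.1 _) (integrable_const 1)
    (ae_of_all _ fun _ => pow_le_one₀ ht.1 ht.2)
  simpa [pgf] using this

lemma pgf_mem_Icc [IsProbabilityMeasure P] (ht : t ∈ Icc (0 : ℝ) 1) :
    pgf P ξ t ∈ Icc (0 : ℝ) 1 :=
  ⟨pgf_nonneg ht.1, pgf_le_one ht⟩

lemma pgf_zero (hξ : Measurable ξ) : pgf P ξ 0 = P.real {ω | ξ ω = 0} := by
  have : (fun ω => (0 : ℝ) ^ ξ ω) = (ξ ⁻¹' {0}).indicator 1 := by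
    ext ω; by_cases h : ξ ω = 0 <;> simp [h]
  rw [pgf, this, integral_indicator_one (hξ (measurableSet_singleton 0))]
  rfl

lemma ofReal_pgf [IsProbabilityMeasure P] (hξ : Measurable ξ) (ht : t ∈ Icc (0 : ℝ) 1) :
    ENNReal.ofReal (pgf P ξ t) = ∫⁻ ω, ENNReal.ofReal t ^ ξ ω ∂P := by
  rw [pgf, ofReal_integral_eq_lintegral_ofReal (integrable_pow_of_mem_Icc hξ ht)
    (ae_of_all _ fun _ => pow_nonneg ht.1 _)]
  simp only [ENNReal.ofReal_pow ht.1]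

lemma continuousOn_pgf [IsProbabilityMeasure P] (hξ : Measurable ξ) :
    ContinuousOn (pgf P ξ) (Icc 0 1) :=
  continuousOn_of_dominated (bound := fun _ => 1)
    (fun t ht => (integrable_pow_of_mem_Icc hξ ht).aestronglyMeasurable)
    (fun t ht => ae_of_all _ fun ω => by
      rw [Real.norm_eq_abs, abs_of_nonneg (pow_nonneg ht.1 _)]
      exact pow_le_one₀ ht.1 ht.2)
    (integrable_const 1) (ae_of_all _ fun ω => (continuous_pow _).continuousOn)

lemma one_sub_pgf_eq_mul_integral_geom_sum [IsProbabilityMeasure P] (hξ : Measurable ξ)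
    (ht : t ∈ Icc (0 : ℝ) 1) :
    1 - pgf P ξ t = (1 - t) * ∫ ω, ∑ j ∈ range (ξ ω), t ^ j ∂P := by
  simp only [← integral_const_mul, mul_neg_geom_sum, pgf]
  rw [integral_sub (integrable_const 1) (integrable_pow_of_mem_Icc hξ ht), integral_const]
  simp

lemma integrable_geom_sum [IsProbabilityMeasure P] (hξ : Measurable ξ)
    (hint : Integrable (fun ω => (ξ ω : ℝ)) P) (ht : t ∈ Icc (0 : ℝ) 1) :
    Integrable (fun ω => ∑ j ∈ range (ξ ω), t ^ j) P :=
  hint.mono' ((measurable_of_countable fun k => ∑ j ∈ range k, t ^ j).comp hξ).aestronglyMeasurable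
    (ae_of_all _ fun ω => by
      rw [Real.norm_eq_abs, abs_of_nonneg (sum_nonneg fun j _ => pow_nonneg ht.1 _)]
      exact geom_sum_le_of_le_one ht.1 ht.2 _)

lemma tendsto_one_sub_pgf_div [IsProbabilityMeasure P] (hξ : Measurable ξ)
    (hint : Integrable (fun ω => (ξ ω : ℝ)) P) :
    Tendsto (fun t => (1 - pgf P ξ t) / (1 - t)) (𝓝[<] 1) (𝓝 (∫ ω, (ξ ω : ℝ) ∂P)) := by
  have hIoo : ∀ᶠ t in 𝓝[<] (1 : ℝ), t ∈ Icc (0 : ℝ) 1 :=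
    mem_of_superset (Ioo_mem_nhdsLT zero_lt_one) Ioo_subset_Icc_self
  have heq : (fun t => ∫ ω, ∑ j ∈ range (ξ ω), t ^ j ∂P) =ᶠ[𝓝[<] 1]
      fun t => (1 - pgf P ξ t) / (1 - t) := by
    filter_upwards [hIoo, self_mem_nhdsWithin] with t ht ht1
    rw [one_sub_pgf_eq_mul_integral_geom_sum hξ ht, mul_div_cancel_left₀ _ (sub_ne_zero.2 ht1.ne')]
  refine Tendsto.congr' heq ?_
  have hlim : ∫ ω, (ξ ω : ℝ) ∂P = ∫ ω, ∑ j ∈ range (ξ ω), (1 : ℝ) ^ j ∂P := by simp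
  rw [hlim]
  refine tendsto_integral_filter_of_dominated_convergence (fun ω => (ξ ω : ℝ))
    (hIoo.mono fun t ht => (integrable_geom_sum hξ hint ht).aestronglyMeasurable)
    (hIoo.mono fun t ht => ae_of_all _ fun ω => ?_) hint
    (ae_of_all _ fun ω => ((continuous_finsetSum _ fun j _ => continuous_pow j).tendsto 1).mono_left
      nhdsWithin_le_nhds)
  rw [Real.norm_eq_abs, abs_of_nonneg (sum_nonneg fun j _ => pow_nonneg ht.1 _)]
  exact geom_sum_le_of_le_one ht.1 ht.2 _

lemma pgf_lt_one [IsProbabilityMeasure P] (hξ : Measurable ξ)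
    (hμ : 0 < ∫ ω, (ξ ω : ℝ) ∂P) (ht : t ∈ Ico (0 : ℝ) 1) : pgf P ξ t < 1 := by
  by_contra! hle
  have hpow := integrable_pow_of_mem_Icc (P := P) hξ (Ico_subset_Icc_self ht)
  have hnonneg : 0 ≤ fun ω => 1 - t ^ ξ ω := fun ω => sub_nonneg.2 (pow_le_one₀ ht.1 ht.2.le)
  have hzero : ∫ ω, (1 - t ^ ξ ω) ∂P = 0 := by
    refine le_antisymm ?_ (integral_nonneg hnonneg)
    rw [integral_sub (integrable_const 1) hpow, integral_const, probReal_univ, one_smul]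
    exact sub_nonpos.2 hle
  have hξ0 : (fun ω => (ξ ω : ℝ)) =ᵐ[P] 0 :=
    ((integral_eq_zero_iff_of_nonneg hnonneg ((integrable_const 1).sub hpow)).1 hzero).mono
      fun ω hω => by
        by_contra hne
        exact (pow_lt_one₀ ht.1 ht.2 (by simpa using hne)).ne (sub_eq_zero.1 hω).symm
  rw [integral_congr_ae hξ0] at hμ
  simp at hμ

lemma integral_natCast_eq_measureReal_of_ae_le_one [IsProbabilityMeasure P] (hξ : Measurable ξ)
    (h : ∀ᵐ ω ∂P, ξ ω ≤ 1) : ∫ ω, (ξ ω : ℝ) ∂P = P.real {ω | ξ ω = 1} := by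
  rw [← integral_indicator_one (μ := P) (s := {ω | ξ ω = 1}) (hξ (measurableSet_singleton 1))]
  refine integral_congr_ae (h.mono fun ω hω => ?_)
  interval_cases hk : ξ ω <;> simp [hk]

lemma lt_pgf [IsProbabilityMeasure P] (hξ : Measurable ξ)
    (hint : Integrable (fun ω => (ξ ω : ℝ)) P) (hμ : ∫ ω, (ξ ω : ℝ) ∂P ≤ 1)
    (h1 : P {ω | ξ ω = 1} < 1) (ht : t ∈ Ico (0 : ℝ) 1) : t < pgf P ξ t := by
  have htI := Ico_subset_Icc_self ht
  have hG := integrable_geom_sum (P := P) hξ hint htI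
  have hGle : ∀ ω, ∑ j ∈ range (ξ ω), t ^ j ≤ ξ ω := fun ω => geom_sum_le_of_le_one ht.1 htI.2 _
  suffices hGlt : ∫ ω, ∑ j ∈ range (ξ ω), t ^ j ∂P < 1 by
    have := one_sub_pgf_eq_mul_integral_geom_sum (P := P) hξ htI
    nlinarith [ht.2]
  obtain hμ | hμ := hμ.lt_or_eq
  · exact (integral_mono hG hint hGle).trans_lt hμ
  rw [← hμ, ← sub_pos, ← integral_sub hint hG,
    integral_pos_iff_support_of_nonneg_ae (ae_of_all _ fun ω => sub_nonneg.2 (hGle ω))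
      (hint.sub hG)]
  -- Offspring numbers `≥ 2` have positive probability, and on them the geometric sum is strict.
  have h2 : P {ω | 2 ≤ ξ ω} ≠ 0 := by
    intro h0
    have hle : ∀ᵐ ω ∂P, ξ ω ≤ 1 := (measure_eq_zero_iff_ae_notMem.1 h0).mono fun ω hω => by
      simp only [mem_ofPred_eq, not_le] at hω; omega
    have h1' := (ENNReal.toReal_lt_toReal (measure_ne_top _ _) ENNReal.one_ne_top).2 h1
    rw [← measureReal_def, ← integral_natCast_eq_measureReal_of_ae_le_one hξ hle, hμ] at h1'
    exact h1'.false
  refine (pos_iff_ne_zero.2 h2).trans_le (measure_mono fun ω hω => ?_)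
  exact (sub_pos.2 (geom_sum_lt_of_lt_one ht.1 ht.2 hω)).ne'

end Pgf

lemma measurable_sum_range : Measurable fun z : ℕ × (ℕ → ℕ) => ∑ i ∈ range z.1, z.2 i :=
  measurable_from_prod_countable_right fun k =>
    Finset.measurable_sum (range k) fun i _ => measurable_pi_apply i

section RandomSum

variable {Ω : Type*} [MeasurableSpace Ω] {P : Measure Ω} [IsProbabilityMeasure P]
  {N : Ω → ℕ} {η : ℕ → Ω → ℕ} {ζ : Ω → ℕ}

/-- By independence, the law of `(N, (η i)ᵢ)` is a product measure; integrate out `η` first. -/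
lemma lintegral_pow_sum_range_eq (hN : Measurable N) (hη : ∀ i, Measurable (η i))
    (hNη : IndepFun N (fun ω i => η i ω) P) (hiid : iIndepFun η P)
    (hident : ∀ i, IdentDistrib (η i) ζ P P) (c : ℝ≥0∞) :
    ∫⁻ ω, c ^ ∑ i ∈ range (N ω), η i ω ∂P = ∫⁻ ω, (∫⁻ ω', c ^ ζ ω' ∂P) ^ N ω ∂P := by
  have hrow : Measurable fun ω i => η i ω := measurable_pi_lambda _ hη
  have hpow : Measurable fun m : ℕ => c ^ m := measurable_of_countable _
  set h : ℕ × (ℕ → ℕ) → ℝ≥0∞ := fun z => c ^ ∑ i ∈ range z.1, z.2 i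
  have hh : Measurable h := hpow.comp measurable_sum_range
  have hslice : ∀ k, ∫⁻ y, h (k, y) ∂P.map (fun ω i => η i ω) = (∫⁻ ω, c ^ ζ ω ∂P) ^ k := by
    intro k
    rw [lintegral_map (f := fun y => h (k, y)) (hh.comp measurable_prodMk_left) hrow]
    simp only [h, ← Finset.prod_pow_eq_pow_sum]
    rw [lintegral_prod_eq_prod_lintegral_of_indepFun (range k) (fun i ω => c ^ η i ω)
      (hiid.comp _ fun _ => hpow) fun i => hpow.comp (hη i)]
    have hF : ∀ i, ∫⁻ ω, c ^ η i ω ∂P = ∫⁻ ω, c ^ ζ ω ∂P := fun i =>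
      ((hident i).comp hpow).lintegral_eq
    simp only [hF, prod_const, card_range]
  calc ∫⁻ ω, c ^ ∑ i ∈ range (N ω), η i ω ∂P
      = ∫⁻ z, h z ∂P.map fun ω => (N ω, fun i => η i ω) :=
        (lintegral_map hh (hN.prodMk hrow)).symm
    _ = ∫⁻ k, ∫⁻ y, h (k, y) ∂P.map (fun ω i => η i ω) ∂P.map N := by
        rw [(indepFun_iff_map_prod_eq_prod_map_map hN.aemeasurable hrow.aemeasurable).1 hNη,
          lintegral_prod _ hh.aemeasurable]
    _ = ∫⁻ ω, (∫⁻ ω', c ^ ζ ω' ∂P) ^ N ω ∂P := by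
        simp only [hslice]
        exact lintegral_map (measurable_of_countable _) hN

lemma pgf_sum_range_eq (hN : Measurable N) (hη : ∀ i, Measurable (η i)) (hζ : Measurable ζ)
    (hNη : IndepFun N (fun ω i => η i ω) P) (hiid : iIndepFun η P)
    (hident : ∀ i, IdentDistrib (η i) ζ P P) {t : ℝ} (ht : t ∈ Icc (0 : ℝ) 1) :
    pgf P (fun ω => ∑ i ∈ range (N ω), η i ω) t = pgf P N (pgf P ζ t) := by
  have hS : Measurable fun ω => ∑ i ∈ range (N ω), η i ω :=
    measurable_sum_range.comp (hN.prodMk (measurable_pi_lambda _ hη))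
  rw [← ENNReal.ofReal_eq_ofReal_iff (pgf_nonneg ht.1) (pgf_nonneg (pgf_nonneg ht.1)),
    ofReal_pgf hS ht, ofReal_pgf hN (pgf_mem_Icc ht), ofReal_pgf hζ ht]
  exact lintegral_pow_sum_range_eq hN hη hNη hiid hident _

end RandomSum

section GaltonWatson

variable {Ω : Type*}

abbrev offspringSigma (ξ : ℕ → ℕ → Ω → ℕ) (S : Set (ℕ × ℕ)) : MeasurableSpace Ω :=
  ⨆ p ∈ S, MeasurableSpace.comap (ξ p.1 p.2) inferInstance

variable {ξ : ℕ → ℕ → Ω → ℕ} {X : ℕ → Ω → ℕ}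

lemma measurable_offspringSigma {S : Set (ℕ × ℕ)} {p : ℕ × ℕ} (hp : p ∈ S) :
    Measurable[offspringSigma ξ S] (ξ p.1 p.2) :=
  Measurable.of_comap_le (le_biSup (fun p => MeasurableSpace.comap (ξ p.1 p.2) inferInstance) hp)

lemma measurable_galtonWatson_past (hX0 : ∀ ω, X 0 ω = 1)
    (hXrec : ∀ n ω, X (n + 1) ω = ∑ i ∈ range (X n ω), ξ n i ω) (n : ℕ) :
    Measurable[offspringSigma ξ {p | p.1 < n}] (X n) := by
  induction n with
  | zero => simp only [funext hX0]; exact measurable_const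
  | succ n ih =>
    have hmono : offspringSigma ξ {p | p.1 < n} ≤ offspringSigma ξ {p | p.1 < n + 1} :=
      biSup_mono fun p (hp : p.1 < n) => Nat.lt_succ_of_lt hp
    rw [funext (hXrec n)]
    exact measurable_sum_range.comp ((ih.mono hmono le_rfl).prodMk
      (@measurable_pi_lambda Ω ℕ (fun _ => ℕ) (offspringSigma ξ {p | p.1 < n + 1}) _ _ fun i =>
        measurable_offspringSigma (p := (n, i)) (Nat.lt_succ_self n)))

variable [MeasurableSpace Ω] {P : Measure Ω}

lemma offspringSigma_le (hξm : ∀ n i, Measurable (ξ n i)) (S : Set (ℕ × ℕ)) :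
    offspringSigma ξ S ≤ ‹MeasurableSpace Ω› :=
  iSup₂_le fun p _ => (hξm p.1 p.2).comap_le

lemma measurable_galtonWatson (hξm : ∀ n i, Measurable (ξ n i)) (hX0 : ∀ ω, X 0 ω = 1)
    (hXrec : ∀ n ω, X (n + 1) ω = ∑ i ∈ range (X n ω), ξ n i ω) (n : ℕ) : Measurable (X n) :=
  (measurable_galtonWatson_past hX0 hXrec n).mono (offspringSigma_le hξm _) le_rfl

lemma indepFun_galtonWatson_row (hξm : ∀ n i, Measurable (ξ n i)) [IsProbabilityMeasure P]
    (hindep : iIndepFun (fun p : ℕ × ℕ => ξ p.1 p.2) P) (hX0 : ∀ ω, X 0 ω = 1)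
    (hXrec : ∀ n ω, X (n + 1) ω = ∑ i ∈ range (X n ω), ξ n i ω) (n : ℕ) :
    IndepFun (X n) (fun ω i => ξ n i ω) P := by
  have hpast_row : Indep (offspringSigma ξ {p | p.1 < n}) (offspringSigma ξ {p | p.1 = n}) P :=
    indep_iSup_of_disjoint (m := fun p : ℕ × ℕ => MeasurableSpace.comap (ξ p.1 p.2) inferInstance)
      (fun p => (hξm p.1 p.2).comap_le) ((iIndepFun_iff_iIndep _ _ _).1 hindep)
      (Set.disjoint_left.2 fun p (h1 : p.1 < n) (h2 : p.1 = n) => h1.ne h2)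
  rw [IndepFun_iff_Indep]
  refine indep_of_indep_of_le_right (indep_of_indep_of_le_left hpast_row ?_) ?_
  · exact measurable_iff_comap_le.1 (measurable_galtonWatson_past hX0 hXrec n)
  · exact measurable_iff_comap_le.1
      (@measurable_pi_lambda Ω ℕ (fun _ => ℕ) (offspringSigma ξ {p | p.1 = n}) _ _ fun i =>
        measurable_offspringSigma (p := (n, i)) rfl)

lemma pgf_galtonWatson [IsProbabilityMeasure P] (hξm : ∀ n i, Measurable (ξ n i))
    (hindep : iIndepFun (fun p : ℕ × ℕ => ξ p.1 p.2) P)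
    (hident : ∀ n i, IdentDistrib (ξ n i) (ξ 0 0) P P) (hX0 : ∀ ω, X 0 ω = 1)
    (hXrec : ∀ n ω, X (n + 1) ω = ∑ i ∈ range (X n ω), ξ n i ω) (n : ℕ) {t : ℝ}
    (ht : t ∈ Icc (0 : ℝ) 1) : pgf P (X n) t = (pgf P (ξ 0 0))^[n] t := by
  induction n generalizing t with
  | zero => simp [pgf, funext hX0]
  | succ n ih =>
    rw [funext (hXrec n), pgf_sum_range_eq (measurable_galtonWatson hξm hX0 hXrec n) (hξm n)
      (hξm 0 0) (indepFun_galtonWatson_row hξm hindep hX0 hXrec n)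
      (hindep.precomp (g := fun i => (n, i)) fun i j h => (Prod.mk.inj h).2) (hident n) ht,
      ih (pgf_mem_Icc ht), Function.iterate_succ_apply]

lemma measureReal_galtonWatson_survival [IsProbabilityMeasure P]
    (hξm : ∀ n i, Measurable (ξ n i)) (hindep : iIndepFun (fun p : ℕ × ℕ => ξ p.1 p.2) P)
    (hident : ∀ n i, IdentDistrib (ξ n i) (ξ 0 0) P P) (hX0 : ∀ ω, X 0 ω = 1)
    (hXrec : ∀ n ω, X (n + 1) ω = ∑ i ∈ range (X n ω), ξ n i ω) (n : ℕ) :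
    P.real {ω | 1 ≤ X n ω} = 1 - (pgf P (ξ 0 0))^[n] 0 := by
  have hXm := measurable_galtonWatson hξm hX0 hXrec n
  have hsurv : {ω | 1 ≤ X n ω} = (X n ⁻¹' {0})ᶜ := by
    ext ω; simp [Nat.one_le_iff_ne_zero]
  rw [← pgf_galtonWatson hξm hindep hident hX0 hXrec n ⟨le_rfl, zero_le_one⟩, pgf_zero hXm, hsurv,
    probReal_compl_eq_one_sub (hXm (measurableSet_singleton 0))]
  rfl

end GaltonWatson

/-- For a Galton–Watson process with `X₀ = 1` and offspring mean `μ ∈ (0,1]`,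
the survival probabilities `pₙ = P(Xₙ ≥ 1)` satisfy `pₙ₊₁/pₙ → μ`, provided either
`P(X₁ = 1) < 1` or `μ = 1` with `pₙ = 1` for all `n`. -/
theorem gw_survival_probability_ratio {Ω : Type*} [MeasureSpace Ω]
    [IsProbabilityMeasure (ℙ : Measure Ω)]
    (ξ : ℕ → ℕ → Ω → ℕ) (hξm : ∀ n i, Measurable (ξ n i))
    (hindep : iIndepFun (fun p : ℕ × ℕ => ξ p.1 p.2) ℙ)
    (hident : ∀ n i, IdentDistrib (ξ n i) (ξ 0 0) ℙ ℙ)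
    (X : ℕ → Ω → ℕ)
    (hX0 : ∀ ω, X 0 ω = 1)
    (hXrec : ∀ n ω, X (n + 1) ω = ∑ i ∈ Finset.range (X n ω), ξ n i ω)
    (hintξ : Integrable (fun ω => (ξ 0 0 ω : ℝ)) ℙ)
    (μ : ℝ) (hμ : μ = ∫ ω, (ξ 0 0 ω : ℝ)) (hμmem : μ ∈ Set.Ioc (0 : ℝ) 1)
    (hcase : ℙ {ω | ξ 0 0 ω = 1} < 1 ∨
      (μ = 1 ∧ ∀ n, ℙ {ω | 1 ≤ X n ω} = 1)) :
    Tendsto (fun n : ℕ =>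
        (ℙ {ω | 1 ≤ X (n + 1) ω}).toReal / (ℙ {ω | 1 ≤ X n ω}).toReal)
      atTop (nhds μ) := by
  obtain ⟨hμpos, hμle⟩ := hμmem
  rcases hcase with hcase | ⟨hμ1, hall⟩
  · set f := pgf ℙ (ξ 0 0)
    have hξ := hξm 0 0
    have hf : ∀ t ∈ Ico (0 : ℝ) 1, t < f t ∧ f t < 1 := fun t ht =>
      ⟨lt_pgf hξ hintξ (hμ ▸ hμle) hcase ht, pgf_lt_one hξ (hμ ▸ hμpos) ht⟩
    have hs : Tendsto (fun n => f^[n] 0) atTop (𝓝[<] 1) :=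
      tendsto_nhdsWithin_iff.2 ⟨tendsto_iterate_of_lt zero_lt_one (continuousOn_pgf hξ) hf,
        Eventually.of_forall fun n => (iterate_mem_Ico zero_lt_one hf n).2⟩
    simp only [← measureReal_def, measureReal_galtonWatson_survival hξm hindep hident hX0 hXrec,
      Function.iterate_succ_apply']
    rw [hμ]
    exact (tendsto_one_sub_pgf_div hξ hintξ).comp hs
  · simp [hall, hμ1]
end

section
/- Let T > 0, let p ∈ ℕ, let 0 < τ̄₁ < … < τ̄ₚ < T, and for each j let Zⱼ, Z_{n,j} : ℝ → [0,∞) be functions vanishing on (-∞, 0) with Z_{n,j} → Zⱼ uniformly on [0,T] as n → ∞, each Zⱼ continuous. Let τ̄ⱼ⁽ⁿ⁾ → τ̄ⱼ for each j. Let λₙ : [0,T] → [0,T] be the continuous strictly increasing piecewise-linear bijections with λₙ(τ̄ⱼ) = τ̄ⱼ⁽ⁿ⁾ and λₙ(0)=0, λₙ(T)=T. Then sup_{t∈[0,T]} |sup_{j: τ̄ⱼ ≤ t} Z_{n,j}(λₙ(t) - τ̄ⱼ⁽ⁿ⁾) - sup_{j: τ̄ⱼ ≤ t} Zⱼ(t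 - τ̄ⱼ)| → 0 as n → ∞ (suprema over the empty set are 0). -/
/-!
Since `lam n` is affine between consecutive nodes among `0`, the `τ j` and `T`, the error
`lam n t - t` is a convex combination of its values at two nodes, which are `0` or
`τn n j - τ j`; hence `lam n → id` uniformly on `[0, T]`. Each shot response
`Zn n j (lam n t - τn n j)` then converges uniformly to `Z j (t - τ j)` on `{t | τ j ≤ t}`,
by uniform continuity of `Z j` on the compact `[0, T]`, and a maximum of finitely many
functions is `1`-Lipschitz for the sup distance.
-/

open Filter Set Topology

theorem TendstoUniformlyOn.comp_of_uniformContinuousOn {ι α β γ : Type*} [UniformSpace β]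
    [UniformSpace γ] {l : Filter ι} {F : ι → β → γ} {f : β → γ} {K : Set β}
    (hF : TendstoUniformlyOn F f l K) (hf : UniformContinuousOn f K)
    {u : ι → α → β} {v : α → β} {s : Set α} (hu : TendstoUniformlyOn u v l s)
    (huK : ∀ᶠ i in l, MapsTo (u i) s K) (hvK : MapsTo v s K) :
    TendstoUniformlyOn (fun i x => F i (u i x)) (fun x => f (v x)) l s := by
  intro U hU
  obtain ⟨V, hV, hVU⟩ := comp_mem_uniformity_sets hU
  have hfu := hf.comp_tendstoUniformlyOn_eventually huK hvK hu
  filter_upwards [hfu V hV, hF V hV, huK] with i hfi hFi hKi x hx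
  exact hVU (SetRel.prodMk_mem_comp (hfi x hx) (hFi _ (hKi hx)))

theorem TendstoUniformlyOn.ciSup_prop {ι α γ : Type*} [UniformSpace γ]
    [ConditionallyCompleteLattice γ] {l : Filter ι} {F : ι → α → γ} {f : α → γ} {s : Set α}
    {P : α → Prop} (h : TendstoUniformlyOn F f l (s ∩ {x | P x})) :
    TendstoUniformlyOn (fun i x => ⨆ _ : P x, F i x) (fun x => ⨆ _ : P x, f x) l s := by
  intro U hU
  filter_upwards [h U hU] with i hi x hx
  by_cases hPx : P x
  · simpa only [ciSup_pos hPx] using hi x ⟨hx, hPx⟩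
  · simpa only [ciSup_neg hPx] using refl_mem_uniformity hU

theorem abs_ciSup_sub_ciSup_le {ι : Type*} [Finite ι] [Nonempty ι] {f g : ι → ℝ} {c : ℝ}
    (h : ∀ j, |f j - g j| ≤ c) : |(⨆ j, f j) - ⨆ j, g j| ≤ c := by
  have hbf : BddAbove (range f) := (finite_range f).bddAbove
  have hbg : BddAbove (range g) := (finite_range g).bddAbove
  rw [abs_sub_le_iff, sub_le_iff_le_add, sub_le_iff_le_add]
  constructor
  · exact ciSup_le fun j => by linarith [abs_le.1 (h j), le_ciSup hbg j]
  · exact ciSup_le fun j => by linarith [abs_le.1 (h j), le_ciSup hbf j]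

theorem TendstoUniformlyOn.ciSup {ι κ α : Type*} [Finite κ] {l : Filter ι}
    {F : ι → κ → α → ℝ} {f : κ → α → ℝ} {s : Set α}
    (h : ∀ j, TendstoUniformlyOn (fun i => F i j) (f j) l s) :
    TendstoUniformlyOn (fun i x => ⨆ j, F i j x) (fun x => ⨆ j, f j x) l s := by
  rcases isEmpty_or_nonempty κ with _ | _
  · simpa only [Real.iSup_of_isEmpty] using
      (tendsto_const_nhds (x := (0 : ℝ)) (f := l)).tendstoUniformlyOn_const s
  rw [Metric.tendstoUniformlyOn_iff]
  intro ε hε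
  have hall : ∀ᶠ i in l, ∀ j, ∀ x ∈ s, dist (f j x) (F i j x) < ε / 2 :=
    eventually_all.2 fun j => Metric.tendstoUniformlyOn_iff.1 (h j) _ (half_pos hε)
  filter_upwards [hall] with i hi x hx
  rw [Real.dist_eq]
  exact (abs_ciSup_sub_ciSup_le fun j => (Real.dist_eq _ _ ▸ hi j x hx).le).trans_lt
    (half_lt_self hε)

theorem Finset.exists_gap_around {α : Type*} [LinearOrder α] {S : Finset α} {t : α}
    (ht : t ∉ S) (hlo : ∃ a ∈ S, a ≤ t) (hhi : ∃ b ∈ S, t ≤ b) :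
    ∃ a ∈ S, ∃ b ∈ S, a < t ∧ t < b ∧ ∀ s ∈ S, s ∉ Set.Ioo a b := by
  obtain ⟨a₀, ha₀, ha₀t⟩ := hlo
  obtain ⟨b₀, hb₀, htb₀⟩ := hhi
  have hA : (S.filter (· ≤ t)).Nonempty := ⟨a₀, Finset.mem_filter.2 ⟨ha₀, ha₀t⟩⟩
  have hB : (S.filter (t ≤ ·)).Nonempty := ⟨b₀, Finset.mem_filter.2 ⟨hb₀, htb₀⟩⟩
  obtain ⟨haS, hat⟩ := Finset.mem_filter.1 ((S.filter (· ≤ t)).max'_mem hA)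
  obtain ⟨hbS, htb⟩ := Finset.mem_filter.1 ((S.filter (t ≤ ·)).min'_mem hB)
  refine ⟨_, haS, _, hbS, hat.lt_of_ne fun h => ht (h ▸ haS),
    htb.lt_of_ne' fun h => ht (h ▸ hbS), fun s hs ⟨has, hsb⟩ => ?_⟩
  rcases le_total s t with hst | hts
  · exact has.not_ge (Finset.le_max' _ s (Finset.mem_filter.2 ⟨hs, hst⟩))
  · exact hsb.not_ge (Finset.min'_le _ s (Finset.mem_filter.2 ⟨hs, hts⟩))

theorem abs_le_of_affine_on_gaps {S : Finset ℝ} {f : ℝ → ℝ} {c t : ℝ}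
    (hS : ∀ s ∈ S, |f s| ≤ c)
    (haff : ∀ a ∈ S, ∀ b ∈ S, a < b → (∀ s ∈ S, s ∉ Ioo a b) → ∀ θ ∈ Icc (0 : ℝ) 1,
      f (a + θ * (b - a)) = f a + θ * (f b - f a))
    (hlo : ∃ a ∈ S, a ≤ t) (hhi : ∃ b ∈ S, t ≤ b) : |f t| ≤ c := by
  by_cases htS : t ∈ S
  · exact hS t htS
  obtain ⟨a, haS, b, hbS, hat, htb, hgap⟩ := Finset.exists_gap_around htS hlo hhi
  have hab : 0 < b - a := by linarith
  set θ := (t - a) / (b - a)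
  have hθ : θ ∈ Icc (0 : ℝ) 1 :=
    ⟨div_nonneg (by linarith) hab.le, (div_le_one hab).2 (by linarith)⟩
  have ht : a + θ * (b - a) = t := by
    rw [div_mul_cancel₀ _ hab.ne']
    ring
  rw [← ht, haff a haS b hbS (by linarith) hgap θ hθ]
  exact abs_le.2 ((convex_Icc (-c) c).add_smul_sub_mem (abs_le.1 (hS a haS))
    (abs_le.1 (hS b hbS)) hθ)

theorem tendstoUniformlyOn_id_of_affine_on_gaps {ι κ : Type*} [Fintype κ] {l : Filter ι}
    {T : ℝ} (hT : 0 ≤ T) {τ : κ → ℝ} (hτ : ∀ j, τ j ∈ Icc 0 T) {τn : ι → κ → ℝ}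
    (hτn : ∀ j, Tendsto (fun n => τn n j) l (𝓝 (τ j))) {lam : ι → ℝ → ℝ}
    (h0 : ∀ n, lam n 0 = 0) (hTend : ∀ n, lam n T = T) (hnode : ∀ n j, lam n (τ j) = τn n j)
    (hlin : ∀ n, ∀ a ∈ Icc (0 : ℝ) T, ∀ b ∈ Icc (0 : ℝ) T, a < b →
      (∀ j, τ j ∉ Ioo a b) → ∀ θ ∈ Icc (0 : ℝ) 1,
      lam n (a + θ * (b - a)) = lam n a + θ * (lam n b - lam n a)) :
    TendstoUniformlyOn lam (fun t => t) l (Icc 0 T) := by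
  classical
  set S : Finset ℝ := insert 0 (insert T (Finset.univ.image τ))
  have hS : ∀ s ∈ S, s ∈ Icc 0 T := by
    simp only [S, Finset.mem_insert, Finset.mem_image, Finset.mem_univ, true_and]
    rintro s (rfl | rfl | ⟨j, rfl⟩)
    exacts [left_mem_Icc.2 hT, right_mem_Icc.2 hT, hτ j]
  rw [Metric.tendstoUniformlyOn_iff]
  intro ε hε
  have hclose : ∀ᶠ n in l, ∀ j, dist (τn n j) (τ j) < ε / 2 :=
    eventually_all.2 fun j => Metric.tendsto_nhds.1 (hτn j) _ (half_pos hε)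
  filter_upwards [hclose] with n hn t ht
  have hnodes : ∀ s ∈ S, |lam n s - s| ≤ ε / 2 := by
    simp only [S, Finset.mem_insert, Finset.mem_image, Finset.mem_univ, true_and]
    rintro s (rfl | rfl | ⟨j, rfl⟩)
    · simpa [h0 n] using (half_pos hε).le
    · simpa [hTend n] using (half_pos hε).le
    · simpa only [hnode n j, ← Real.dist_eq] using (hn j).le
  have haff : ∀ a ∈ S, ∀ b ∈ S, a < b → (∀ s ∈ S, s ∉ Ioo a b) → ∀ θ ∈ Icc (0 : ℝ) 1,
      lam n (a + θ * (b - a)) - (a + θ * (b - a)) =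
        lam n a - a + θ * (lam n b - b - (lam n a - a)) := by
    intro a ha b hb hab hgap θ hθ
    rw [hlin n a (hS a ha) b (hS b hb) hab (fun j => hgap _ (by simp [S])) θ hθ]
    ring
  rw [Real.dist_eq, abs_sub_comm]
  exact (abs_le_of_affine_on_gaps hnodes haff ⟨0, by simp [S], ht.1⟩
    ⟨T, by simp [S], ht.2⟩).trans_lt (half_lt_self hε)

theorem tendstoUniformlyOn_shot_response {ι : Type*} {l : Filter ι} {T σ : ℝ}
    (hσ : σ ∈ Icc 0 T) {Z : ℝ → ℝ} {Zn : ι → ℝ → ℝ} (hZ : ContinuousOn Z (Icc 0 T))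
    (hunif : TendstoUniformlyOn Zn Z l (Icc 0 T)) {σn : ι → ℝ} (hσn : Tendsto σn l (𝓝 σ))
    {lam : ι → ℝ → ℝ} (hlam : TendstoUniformlyOn lam (fun t => t) l (Icc 0 T))
    (hmaps : ∀ n, MapsTo (lam n) (Icc 0 T) (Icc 0 T))
    (hmono : ∀ n, MonotoneOn (lam n) (Icc 0 T)) (hnode : ∀ n, lam n σ = σn n) :
    TendstoUniformlyOn (fun n t => ⨆ _ : σ ≤ t, Zn n (lam n t - σn n))
      (fun t => ⨆ _ : σ ≤ t, Z (t - σ)) l (Icc 0 T) := by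
  refine TendstoUniformlyOn.ciSup_prop (hunif.comp_of_uniformContinuousOn
    (isCompact_Icc.uniformContinuousOn_of_continuous hZ)
    ((hlam.fun_sub (hσn.tendstoUniformlyOn_const _)).mono inter_subset_left)
    (Eventually.of_forall fun n => ?_) ?_)
  · rintro t ⟨ht, hσt⟩
    have hσn_le : σn n ≤ lam n t := hnode n ▸ hmono n hσ ht hσt
    have hσn_nonneg : 0 ≤ σn n := hnode n ▸ (hmaps n hσ).1
    constructor <;> linarith [(hmaps n ht).2]
  · rintro t ⟨ht, hσt : σ ≤ t⟩
    constructor <;> linarith [ht.2, hσ.1]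

theorem sup_shot_responses_uniform_convergence_general
    (T : ℝ) (hT : 0 < T) (p : ℕ)
    (τ : Fin p → ℝ) (hτmem : ∀ j, τ j ∈ Set.Ioo 0 T)
    (Z : Fin p → ℝ → ℝ) (Zn : ℕ → Fin p → ℝ → ℝ)
    (hZcont : ∀ j, Continuous (Z j))
    (hunif : ∀ j, TendstoUniformlyOn (fun n => Zn n j) (Z j) atTop (Set.Icc 0 T))
    (τn : ℕ → Fin p → ℝ)
    (hτn : ∀ j, Tendsto (fun n => τn n j) atTop (nhds (τ j)))
    (lam : ℕ → ℝ → ℝ)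
    (hmaps : ∀ n, Set.MapsTo (lam n) (Set.Icc 0 T) (Set.Icc 0 T))
    (hmono : ∀ n, StrictMonoOn (lam n) (Set.Icc 0 T))
    (h0 : ∀ n, lam n 0 = 0) (hTend : ∀ n, lam n T = T)
    (hnode : ∀ n j, lam n (τ j) = τn n j)
    (hlin : ∀ n, ∀ a ∈ Set.Icc (0 : ℝ) T, ∀ b ∈ Set.Icc (0 : ℝ) T, a < b →
      (∀ j, τ j ∉ Set.Ioo a b) → ∀ θ ∈ Set.Icc (0 : ℝ) 1,
      lam n (a + θ * (b - a)) = lam n a + θ * (lam n b - lam n a)) :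
    TendstoUniformlyOn
      (fun n t => ⨆ j, ⨆ (_ : τ j ≤ t), Zn n j (lam n t - τn n j))
      (fun t => ⨆ j, ⨆ (_ : τ j ≤ t), Z j (t - τ j))
      atTop (Set.Icc 0 T) := by
  have hτ : ∀ j, τ j ∈ Icc 0 T := fun j => Ioo_subset_Icc_self (hτmem j)
  have hlam : TendstoUniformlyOn lam (fun t => t) atTop (Icc 0 T) :=
    tendstoUniformlyOn_id_of_affine_on_gaps hT.le hτ hτn h0 hTend hnode hlin
  exact TendstoUniformlyOn.ciSup fun j => tendstoUniformlyOn_shot_response (hτ j)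
    (hZcont j).continuousOn (hunif j) (hτn j) hlam hmaps (fun n => (hmono n).monotoneOn)
    fun n => hnode n j

/-- Deterministic lemma behind Step 4 of the proof of Theorem 1.1: time-changing by
the piecewise-linear maps `lam n` that align the nodes `τₙ(j)` with `τ(j)` makes the
finite maximum of uniformly convergent shot responses converge uniformly. -/
theorem sup_shot_responses_uniform_convergence
    (T : ℝ) (hT : 0 < T) (p : ℕ)
    (τ : Fin p → ℝ) (hτmono : StrictMono τ) (hτmem : ∀ j, τ j ∈ Set.Ioo 0 T)
    (Z : Fin p → ℝ → ℝ) (Zn : ℕ → Fin p → ℝ → ℝ)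
    (hZnn : ∀ j t, 0 ≤ Z j t) (hZnnn : ∀ n j t, 0 ≤ Zn n j t)
    (hZ0 : ∀ j t, t < 0 → Z j t = 0) (hZn0 : ∀ n j t, t < 0 → Zn n j t = 0)
    (hZcont : ∀ j, Continuous (Z j))
    (hunif : ∀ j, TendstoUniformlyOn (fun n => Zn n j) (Z j) atTop (Set.Icc 0 T))
    (τn : ℕ → Fin p → ℝ)
    (hτn : ∀ j, Tendsto (fun n => τn n j) atTop (nhds (τ j)))
    (lam : ℕ → ℝ → ℝ)
    (hmaps : ∀ n, Set.MapsTo (lam n) (Set.Icc 0 T) (Set.Icc 0 T))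
    (hcont : ∀ n, ContinuousOn (lam n) (Set.Icc 0 T))
    (hmono : ∀ n, StrictMonoOn (lam n) (Set.Icc 0 T))
    (h0 : ∀ n, lam n 0 = 0) (hTend : ∀ n, lam n T = T)
    (hnode : ∀ n j, lam n (τ j) = τn n j)
    (hlin : ∀ n, ∀ a ∈ Set.Icc (0 : ℝ) T, ∀ b ∈ Set.Icc (0 : ℝ) T, a < b →
      (∀ j, τ j ∉ Set.Ioo a b) → ∀ θ ∈ Set.Icc (0 : ℝ) 1,
      lam n (a + θ * (b - a)) = lam n a + θ * (lam n b - lam n a)) :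
    TendstoUniformlyOn
      (fun n t => ⨆ j, ⨆ (_ : τ j ≤ t), Zn n j (lam n t - τn n j))
      (fun t => ⨆ j, ⨆ (_ : τ j ≤ t), Z j (t - τ j))
      atTop (Set.Icc 0 T) :=
  sup_shot_responses_uniform_convergence_general T hT p τ hτmem Z Zn hZcont hunif τn hτn lam hmaps
    hmono h0 hTend hnode hlin
end
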